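/- Let f : D ⟶ D′ be a natural transformation between Dirichlet functors. Then f is cartesian (every naturality square is a pullback) if and only if the single naturality square associated to the unique map 0 → 1, namely the square with top edge f₁ : D(1) → D′(1), bottom edge f₀ : D(0) → D′(0), and vertical edges D(0!) and D′(0!), is a pullback square. -/

import Mathlib

/- STATEMENT 13: Let `f : D ⟶ D′` be a natural transformation between Dirichlet functors.
Then `f` is cartesian (every naturality square is a pullback) if and only if the single
naturality square associated to the unique map `0 → 1` — the square with top edge
`f₁ : D(1) → D′(1)`, bottom edge `f₀ : D(0) → D′(0)`, and vertical edges `D(0!)` and `D′(0!)`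
— is a pullback square. -/

open CategoryTheory CategoryTheory.Limits Opposite

noncomputable section

noncomputable instance (X Y : FintypeCat.{0}) : Fintype (X ⟶ Y) := by
  haveI : Finite (X ⟶ Y) := Finite.of_injective (fun f : X ⟶ Y => (f : X → Y))
    (fun f g h => FintypeCat.hom_ext _ _ (congrFun h))
  exact Fintype.ofFinite _

/-- The finite coproduct `∐ᵢ Fin(–, dᵢ)` of representable presheaves `FintypeCatᵒᵖ ⥤ FintypeCat`. -/
def dirichletSum {I : Type} [Fintype I] (d : I → FintypeCat.{0}) :
    FintypeCat.{0}ᵒᵖ ⥤ FintypeCat.{0} where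
  obj X := FintypeCat.of (Σ i, (X.unop ⟶ d i))
  map f := FintypeCat.homMk (fun x => ⟨x.1, f.unop ≫ x.2⟩)

/-- A Dirichlet functor is a finite coproduct of representable presheaves. -/
def IsDirichlet (D : FintypeCat.{0}ᵒᵖ ⥤ FintypeCat.{0}) : Prop :=
  ∃ (I : Type) (_ : Fintype I) (d : I → FintypeCat.{0}), Nonempty (D ≅ dirichletSum d)

/-- The empty finite set `0`. -/
abbrev X0 : FintypeCat.{0} := FintypeCat.of PEmpty

/-- A one-element finite set `1`. -/
abbrev X1 : FintypeCat.{0} := FintypeCat.of PUnit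

/-- The unique function `0! : 0 → 1`. -/
def zeroToOne : X0 ⟶ X1 := FintypeCat.homMk (fun x => x.elim)

/- By Yoneda, a natural transformation `f` between sums of representables sends the summand
`Fin(–, d i)` into a single summand `Fin(–, d' j)` by postcomposition with some
`u i : d i ⟶ d' j`. The pullback of the `0!`-square is `Σ i, d' (j i)`, with comparison map
`Σ i, u i`, so that square is a pullback exactly when every `u i` is a bijection. In that case
every naturality square is a pullback: a compatible pair `(t, s)` lifts uniquely to
`t ≫ (u i)⁻¹`. Cartesianness is invariant under isomorphism, so this applies to all Dirichlet
functors. -/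

lemma FintypeCat.isPullback_iff {P X Y Z : FintypeCat} (t : P ⟶ X) (l : P ⟶ Y) (r : X ⟶ Z)
    (b : Y ⟶ Z) :
    IsPullback t l r b ↔ t ≫ r = l ≫ b ∧ (∀ p q, t p = t q ∧ l p = l q → p = q) ∧
      ∀ x y, r x = b y → ∃ p, t p = x ∧ l p = y := by
  constructor
  · intro h
    exact ⟨h.w, ((Types.isPullback_iff _ _ _ _).mp (h.map FintypeCat.incl)).2⟩
  · rintro ⟨w, h⟩
    exact IsPullback.of_map FintypeCat.incl w
      ((Types.isPullback_iff _ _ _ _).mpr ⟨by simp only [← Functor.map_comp, w], h⟩)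

lemma X0_hom_ext {A : FintypeCat.{0}} (a b : X0 ⟶ A) : a = b :=
  FintypeCat.hom_ext _ _ fun x => x.elim

lemma isPullback_naturality_iff_of_iso {C D : Type*} [Category C] [Category D]
    {F G F' G' : C ⥤ D} (e : F ≅ F') (e' : G ≅ G') (f : F ⟶ G) {X Y : C} (g : X ⟶ Y) :
    IsPullback (f.app X) (F.map g) (G.map g) (f.app Y) ↔
      IsPullback ((e.inv ≫ f ≫ e'.hom).app X) (F'.map g) (G'.map g)
        ((e.inv ≫ f ≫ e'.hom).app Y) := by
  constructor
  · intro h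
    exact h.of_iso (e.app X) (e'.app X) (e.app Y) (e'.app Y) (by simp) (e.hom.naturality g)
      (e'.hom.naturality g) (by simp)
  · intro h
    exact h.of_iso (e.app X).symm (e'.app X).symm (e.app Y).symm (e'.app Y).symm (by simp)
      (e.inv.naturality g) (e'.inv.naturality g) (by simp)

section DirichletSum

variable {I J : Type} [Fintype I] [Fintype J] {d : I → FintypeCat.{0}} {d' : J → FintypeCat.{0}}

lemma dirichletSum_map_mk {X Y : FintypeCat.{0}ᵒᵖ} (g : X ⟶ Y) (i : I) (s : X.unop ⟶ d i) :
    (dirichletSum d).map g ⟨i, s⟩ = ⟨i, g.unop ≫ s⟩ :=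
  rfl

def dirichletSumComponent (f : dirichletSum d ⟶ dirichletSum d') (i : I) : Σ j, (d i ⟶ d' j) :=
  f.app (op (d i)) ⟨i, 𝟙 (d i)⟩

lemma dirichletSum_app_mk (f : dirichletSum d ⟶ dirichletSum d') (X : FintypeCat.{0}ᵒᵖ) (i : I)
    (s : X.unop ⟶ d i) :
    f.app X ⟨i, s⟩ = ⟨(dirichletSumComponent f i).1, s ≫ (dirichletSumComponent f i).2⟩ :=
  ConcreteCategory.congr_hom (f.naturality s.op) ⟨i, 𝟙 (d i)⟩

lemma isPullback_dirichletSum_of_isIso (f : dirichletSum d ⟶ dirichletSum d')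
    (hf : ∀ i, IsIso (dirichletSumComponent f i).2) {X Y : FintypeCat.{0}ᵒᵖ} (g : X ⟶ Y) :
    IsPullback (f.app X) ((dirichletSum d).map g) ((dirichletSum d').map g) (f.app Y) := by
  refine (FintypeCat.isPullback_iff _ _ _ _).mpr ⟨(f.naturality g).symm, ?_, ?_⟩
  · rintro ⟨i, s⟩ ⟨i', s'⟩ ⟨happ, hmap⟩
    obtain rfl : i = i' := congrArg Sigma.fst hmap
    rw [dirichletSum_app_mk, dirichletSum_app_mk] at happ
    exact congrArg _ ((cancel_mono _).mp (eq_of_heq (Sigma.mk.inj happ).2))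
  · rintro ⟨j, t⟩ ⟨i, s⟩ h
    rw [dirichletSum_app_mk, dirichletSum_map_mk] at h
    obtain rfl : j = (dirichletSumComponent f i).1 := congrArg Sigma.fst h
    have ht : g.unop ≫ t = s ≫ (dirichletSumComponent f i).2 := eq_of_heq (Sigma.mk.inj h).2
    refine ⟨⟨i, t ≫ inv (dirichletSumComponent f i).2⟩, ?_, ?_⟩
    · rw [dirichletSum_app_mk, Category.assoc, IsIso.inv_hom_id, Category.comp_id]
    · rw [dirichletSum_map_mk, ← Category.assoc, ht, Category.assoc, IsIso.hom_inv_id,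
        Category.comp_id]

lemma isIso_dirichletSumComponent_of_isPullback (f : dirichletSum d ⟶ dirichletSum d')
    (hf : IsPullback (f.app (op X1)) ((dirichletSum d).map zeroToOne.op)
      ((dirichletSum d').map zeroToOne.op) (f.app (op X0))) (i : I) :
    IsIso (dirichletSumComponent f i).2 := by
  obtain ⟨-, hinj, hex⟩ := (FintypeCat.isPullback_iff _ _ _ _).mp hf
  set u := dirichletSumComponent f i
  rw [ConcreteCategory.isIso_iff_bijective]
  constructor
  · intro z₁ z₂ hz
    have hpt : (⟨i, FintypeCat.homMk fun _ => z₁⟩ : (dirichletSum d).obj (op X1)) =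
        ⟨i, FintypeCat.homMk fun _ => z₂⟩ := by
      refine hinj _ _ ⟨?_, ?_⟩
      · rw [dirichletSum_app_mk, dirichletSum_app_mk]
        congr 1
        exact FintypeCat.hom_ext _ _ fun _ => hz
      · rw [dirichletSum_map_mk, dirichletSum_map_mk]
        congr 1
        exact X0_hom_ext _ _
    exact ConcreteCategory.congr_hom (eq_of_heq (Sigma.mk.inj hpt).2) PUnit.unit
  · intro y
    obtain ⟨⟨i', x⟩, hx, hi'⟩ := hex ⟨u.1, FintypeCat.homMk fun _ => y⟩
      ⟨i, FintypeCat.homMk PEmpty.elim⟩ (by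
        rw [dirichletSum_map_mk, dirichletSum_app_mk]
        congr 1
        exact X0_hom_ext _ _)
    obtain rfl : i' = i := congrArg Sigma.fst hi'
    rw [dirichletSum_app_mk] at hx
    exact ⟨x PUnit.unit, ConcreteCategory.congr_hom (eq_of_heq (Sigma.mk.inj hx).2) PUnit.unit⟩

end DirichletSum

theorem cartesian_iff_zeroOne_square_pullback
    (D D' : FintypeCat.{0}ᵒᵖ ⥤ FintypeCat.{0})
    (hD : IsDirichlet D) (hD' : IsDirichlet D') (f : D ⟶ D') :
    (∀ (X Y : FintypeCat.{0}ᵒᵖ) (g : X ⟶ Y),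
        IsPullback (f.app X) (D.map g) (D'.map g) (f.app Y)) ↔
      IsPullback (f.app (op X1)) (D.map zeroToOne.op) (D'.map zeroToOne.op)
        (f.app (op X0)) := by
  refine ⟨fun h => h _ _ _, fun h X Y g => ?_⟩
  obtain ⟨I, _, d, ⟨e⟩⟩ := hD
  obtain ⟨J, _, d', ⟨e'⟩⟩ := hD'
  rw [isPullback_naturality_iff_of_iso e e'] at h ⊢
  exact isPullback_dirichletSum_of_isIso _ (isIso_dirichletSumComponent_of_isPullback _ h) g
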